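/- Let φ : ℝ → X be Lagrange stable, Q := closure of φ(ℝ), and F ∈ C(ℝ × Q, X) Lagrange stable (the set of its translates precompact, equivalently F(ℝ × Q) precompact and F uniformly continuous). Then the function ψ(t) := F(t, φ(t)) is Lagrange stable in C(ℝ, X). -/
import Mathlib


open Set

/-- The graph map `χ ↦ (id, χ)` is continuous for the compact-open topologies. -/
lemma continuous_graphMk17 {A B : Type*} [TopologicalSpace A] [T2Space A]
    [TopologicalSpace B] :
    Continuous (fun χ : C(A, B) => (ContinuousMap.id A).prodMk χ) := by
  rw [ContinuousMap.continuous_compactOpen]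
  intro K hK U hU
  rw [isOpen_iff_forall_mem_open]
  intro χ₀ hχ₀
  -- for each point of K choose a basic open box inside U
  choose V W hVopen hWopen haV haW hsub using
    fun a : K => isOpen_prod_iff.mp hU a (χ₀ a) (hχ₀ a.2)
  -- the open cover of K
  set O : K → Set A := fun a => V a ∩ χ₀ ⁻¹' W a with hO
  have hOopen : ∀ a : K, IsOpen (O a) := fun a =>
    (hVopen a).inter ((hWopen a).preimage χ₀.continuous)
  have hcover : K ⊆ ⋃ a : K, O a := fun x hx =>
    mem_iUnion.mpr ⟨⟨x, hx⟩, haV _, haW _⟩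
  obtain ⟨t, ht⟩ := hK.elim_finite_subcover O hOopen hcover
  obtain ⟨K', hK'c, hK'sub, hK'cover⟩ := hK.finite_compact_cover t O
    (fun a _ => hOopen a) ht
  refine ⟨⋂ a ∈ t, {χ : C(A, B) | MapsTo χ (K' a) (W a)}, ?_, ?_, ?_⟩
  · intro χ hχ
    simp only [mem_iInter, mem_setOf_eq] at hχ
    intro x hx
    rw [hK'cover] at hx
    obtain ⟨a, hat, hxa⟩ := mem_iUnion₂.mp hx
    have hxO : x ∈ O a := hK'sub a hxa
    exact hsub a ⟨hxO.1, hχ a hat hxa⟩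
  · exact isOpen_biInter_finset fun a _ =>
      ContinuousMap.isOpen_setOf_mapsTo (hK'c a) (hWopen a)
  · simp only [mem_iInter, mem_setOf_eq]
    intro a _ x hx
    exact (hK'sub a hx).2

/-- The `h`-translate of a continuous function `φ : ℝ → X`. -/
noncomputable def translate17 {X : Type*} [MetricSpace X] (φ : C(ℝ, X)) (h : ℝ) :
    C(ℝ, X) :=
  φ.comp ⟨fun t => t + h, by continuity⟩

/-- Shift by `τ` on `C(ℝ × Q, X)`. -/
noncomputable def shiftQ17 {Q X : Type*} [TopologicalSpace Q] [MetricSpace X]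
    (τ : ℝ) (F : C(ℝ × Q, X)) : C(ℝ × Q, X) :=
  F.comp ⟨fun p => (p.1 + τ, p.2), by continuity⟩

/-- Let `φ : ℝ → X` be Lagrange stable, `Q` the closure of its range, and
`F ∈ C(ℝ × Q, X)` Lagrange stable. Then `ψ(t) := F(t, φ(t))` is Lagrange stable. -/
theorem stmt17 {X : Type*} [MetricSpace X] [CompleteSpace X]
    (φ : C(ℝ, X))
    (hφ : IsCompact (closure {χ : C(ℝ, X) | ∃ h : ℝ, χ = translate17 φ h}))
    (F : C(ℝ × (closure (Set.range φ) : Set X), X))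
    (hF : IsCompact (closure
      {G : C(ℝ × (closure (Set.range φ) : Set X), X) | ∃ τ : ℝ, G = shiftQ17 τ F}))
    (ψ : C(ℝ, X))
    (hψ : ∀ t : ℝ, ψ t = F (t, ⟨φ t, subset_closure (Set.mem_range_self t)⟩)) :
    IsCompact (closure {χ : C(ℝ, X) | ∃ h : ℝ, χ = translate17 ψ h}) := by
  classical
  set Sφ : Set C(ℝ, X) := {χ : C(ℝ, X) | ∃ h : ℝ, χ = translate17 φ h} with hSφ
  -- `Q := closure (range φ)` is compact
  have hQc : IsCompact (closure (Set.range φ) : Set X) := by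
    have h1 : Continuous (fun χ : C(ℝ, X) => χ (0 : ℝ)) := continuous_eval_const 0
    have h2 : IsCompact ((fun χ : C(ℝ, X) => χ 0) '' closure Sφ) := hφ.image h1
    refine h2.of_isClosed_subset isClosed_closure (closure_minimal ?_ h2.isClosed)
    rintro x ⟨t, rfl⟩
    exact ⟨translate17 φ t, subset_closure ⟨t, rfl⟩, by simp [translate17]⟩
  haveI : CompactSpace (closure (Set.range φ) : Set X) :=
    isCompact_iff_compactSpace.mp hQc
  -- every element of the closure of translates of `φ` takes values in `Q`
  have hval : ∀ χ ∈ closure Sφ, ∀ t : ℝ, χ t ∈ (closure (Set.range φ) : Set X) := by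
    have hclosed : IsClosed {χ : C(ℝ, X) | ∀ t : ℝ, χ t ∈ (closure (Set.range φ) : Set X)} := by
      have : {χ : C(ℝ, X) | ∀ t : ℝ, χ t ∈ (closure (Set.range φ) : Set X)} =
          ⋂ t : ℝ, (fun χ : C(ℝ, X) => χ t) ⁻¹' (closure (Set.range φ) : Set X) := by
        ext χ; simp
      rw [this]
      exact isClosed_iInter fun t => isClosed_closure.preimage (continuous_eval_const t)
    have hsub : closure Sφ ⊆ {χ : C(ℝ, X) | ∀ t : ℝ, χ t ∈ (closure (Set.range φ) : Set X)} := by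
      refine closure_minimal ?_ hclosed
      rintro χ ⟨h, rfl⟩ t
      exact subset_closure (Set.mem_range_self (t + h))
    exact fun χ hχ t => hsub hχ t
  -- the postcomposition with the inclusion `Q ↪ X`
  set ι : C((closure (Set.range φ) : Set X), X) := ⟨Subtype.val, continuous_subtype_val⟩ with hι
  set P : C(ℝ, (closure (Set.range φ) : Set X)) → C(ℝ, X) := fun χ => ι.comp χ with hP
  have hPind : Topology.IsInducing P :=
    ContinuousMap.isInducing_postcomp ι Topology.IsInducing.subtypeVal
  have hrange : closure Sφ ⊆ Set.range P := by
    intro χ hχ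
    refine ⟨⟨fun t => ⟨χ t, hval χ hχ t⟩, (map_continuous χ).subtype_mk _⟩, ?_⟩
    ext t; rfl
  have hKq : IsCompact (P ⁻¹' closure Sφ) := hPind.isCompact_preimage' hφ hrange
  -- the combination map
  set Comb : C(ℝ × (closure (Set.range φ) : Set X), X) ×
      C(ℝ, (closure (Set.range φ) : Set X)) → C(ℝ, X) :=
    fun p => p.1.comp ((ContinuousMap.id ℝ).prodMk p.2) with hComb
  have hCombCont : Continuous Comb := by
    have : Comb = (fun x : C(ℝ, ℝ × (closure (Set.range φ) : Set X)) ×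
        C(ℝ × (closure (Set.range φ) : Set X), X) => x.2.comp x.1) ∘
        fun p : C(ℝ × (closure (Set.range φ) : Set X), X) ×
          C(ℝ, (closure (Set.range φ) : Set X)) =>
          ((((ContinuousMap.id ℝ).prodMk p.2 :
            C(ℝ, ℝ × (closure (Set.range φ) : Set X)))), p.1) := rfl
    rw [this]
    exact ContinuousMap.continuous_comp'.comp
      ((continuous_graphMk17.comp continuous_snd).prodMk continuous_fst)
  -- the compact set containing all translates of `ψ`
  have hT : IsCompact (Comb '' (closure
      {G : C(ℝ × (closure (Set.range φ) : Set X), X) | ∃ τ : ℝ, G = shiftQ17 τ F} ×ˢ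
      (P ⁻¹' closure Sφ))) :=
    (hF.prod hKq).image hCombCont
  refine hT.of_isClosed_subset isClosed_closure (closure_minimal ?_ hT.isClosed)
  rintro χ ⟨h, rfl⟩
  -- the lifted translate of φ
  refine ⟨(shiftQ17 h F, ⟨fun t => ⟨φ (t + h), subset_closure (Set.mem_range_self _)⟩,
    ((map_continuous φ).comp (by continuity)).subtype_mk _⟩), ⟨?_, ?_⟩, ?_⟩
  · exact subset_closure ⟨h, rfl⟩
  · refine Set.mem_preimage.mpr ?_
    have : P ⟨fun t => ⟨φ (t + h), subset_closure (Set.mem_range_self _)⟩,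
        ((map_continuous φ).comp (by continuity)).subtype_mk _⟩ = translate17 φ h := by
      ext t; rfl
    rw [this]
    exact subset_closure ⟨h, rfl⟩
  · ext t
    simp only [hComb, ContinuousMap.comp_apply, ContinuousMap.prod_eval,
      ContinuousMap.id_apply, shiftQ17, translate17, ContinuousMap.coe_mk]
    rw [hψ (t + h)]
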